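/- Let x₁ ~ N(0, 1/n) scalar, β₁ deterministic with β₁/√n → γ > 0, and A | x₁ ~ Bernoulli(σ(x₁β₁)). Then lim_{n→∞} E[√n·x₁ | A = 1] = 2·E[z/(1+e^{-γz})], where z ~ N(0,1). -/

import Mathlib

open MeasureTheory ProbabilityTheory Filter

/-- The logistic sigmoid function. -/
noncomputable def sig (t : ℝ) : ℝ := 1 / (1 + Real.exp (-t))

/-!
Rescaling `x = z / √n` turns `N(0, 1/n)` into `N(0, 1)` and the numerator into
`E[z σ((β₁/√n) z)]`. The denominator is exactly `1/2` for every `n`, because `σ(t) + σ(-t) = 1`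
and the centred Gaussian is symmetric. Since `|z σ(c z)| ≤ |z|`, dominated convergence passes
the limit `β₁/√n → γ` inside the numerator.
-/

open Real NNReal Topology

theorem sig_eq_sigmoid : sig = sigmoid := by
  ext t
  rw [sig, sigmoid_def, one_div]

theorem integral_sigmoid_mul_of_map_neg_eq {μ : Measure ℝ} [IsProbabilityMeasure μ]
    (hμ : μ.map (fun x ↦ -x) = μ) (c : ℝ) : ∫ x, sigmoid (x * c) ∂μ = 2⁻¹ := by
  have hint : Integrable (fun x ↦ sigmoid (x * c)) μ :=
    .of_bound (by fun_prop) 1 (.of_forall fun x ↦ by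
      rw [norm_of_nonneg (sigmoid_nonneg _)]; exact sigmoid_le_one _)
  have hsymm : ∫ x, sigmoid (-x * c) ∂μ = ∫ x, sigmoid (x * c) ∂μ := by
    conv_rhs => rw [← hμ]
    exact ((Homeomorph.neg ℝ).measurableEmbedding.integral_map (fun x ↦ sigmoid (x * c))).symm
  simp_rw [neg_mul, sigmoid_neg] at hsymm
  rw [integral_sub (integrable_const 1) hint, integral_const, probReal_univ, one_smul] at hsymm
  linarith

theorem integral_gaussianReal_eq_integral_sqrt_mul {E : Type*} [NormedAddCommGroup E]
    [NormedSpace ℝ E] {v : ℝ≥0} (hv : v ≠ 0) (f : ℝ → E) :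
    ∫ x, f x ∂gaussianReal 0 v = ∫ z, f (√v * z) ∂gaussianReal 0 1 := by
  have hsqrt : √(v : ℝ) ≠ 0 := by positivity
  have hmap : (gaussianReal 0 1).map (√(v : ℝ) * ·) = gaussianReal 0 v := by
    rw [gaussianReal_map_const_mul, mul_zero, mul_one]
    congr 1
    ext
    simp
  rw [← hmap]
  exact (Homeomorph.mulLeft₀ _ hsqrt).measurableEmbedding.integral_map f

theorem tendsto_integral_mul_sigmoid_mul {ι : Type*} {l : Filter ι} [l.IsCountablyGenerated]
    {μ : Measure ℝ} (hμ : Integrable id μ) {c : ι → ℝ} {γ : ℝ} (hc : Tendsto c l (𝓝 γ)) :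
    Tendsto (fun i ↦ ∫ z, z * sigmoid (c i * z) ∂μ) l (𝓝 (∫ z, z * sigmoid (γ * z) ∂μ)) := by
  refine tendsto_integral_filter_of_dominated_convergence (fun z ↦ |z|)
    (.of_forall fun i ↦ by fun_prop) (.of_forall fun i ↦ .of_forall fun z ↦ ?_) hμ.abs
    (.of_forall fun z ↦ ?_)
  · rw [norm_mul, norm_of_nonneg (sigmoid_nonneg _), Real.norm_eq_abs]
    exact mul_le_of_le_one_right (abs_nonneg z) (sigmoid_le_one _)
  · exact ((continuous_sigmoid.tendsto _).comp (hc.mul_const z)).const_mul z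

theorem conditional_expectation_limit_general (β₁ : ℕ → ℝ) (γ : ℝ)
    (hβ : Tendsto (fun n => β₁ n / Real.sqrt n) atTop (nhds γ)) :
    Tendsto (fun n : ℕ =>
        (∫ x, Real.sqrt n * x * sig (x * β₁ n) ∂(gaussianReal 0 (n : NNReal)⁻¹)) /
        (∫ x, sig (x * β₁ n) ∂(gaussianReal 0 (n : NNReal)⁻¹)))
      atTop (nhds (2 * ∫ z, z * sig (γ * z) ∂(gaussianReal 0 1))) := by
  simp only [sig_eq_sigmoid]
  refine ((tendsto_integral_mul_sigmoid_mul ((memLp_id_gaussianReal 1).integrable le_rfl)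
    hβ).const_mul 2).congr' ?_
  filter_upwards [eventually_ne_atTop 0] with n hn
  have hvar : ((n : ℝ≥0)⁻¹) ≠ 0 := by positivity
  have hsqrt : √(n : ℝ) ≠ 0 := by positivity
  rw [integral_sigmoid_mul_of_map_neg_eq (by rw [gaussianReal_map_neg, neg_zero]),
    integral_gaussianReal_eq_integral_sqrt_mul hvar]
  simp only [NNReal.coe_inv, NNReal.coe_natCast, Real.sqrt_inv]
  rw [div_inv_eq_mul, mul_comm]
  congr 1
  refine integral_congr_ae (.of_forall fun z ↦ ?_)
  field_simp

/-- For `x₁ ~ N(0, 1/n)`, `β₁(n)/√n → γ > 0`, and `A | x₁ ~ Bernoulli(σ(x₁β₁))`,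
`E[√n x₁ | A = 1] = E[√n x₁ σ(x₁β₁)] / E[σ(x₁β₁)] → 2 E[z σ(γ z)]` with `z ~ N(0,1)`. -/
theorem conditional_expectation_limit (β₁ : ℕ → ℝ) (γ : ℝ) (hγ : 0 < γ)
    (hβ : Tendsto (fun n => β₁ n / Real.sqrt n) atTop (nhds γ)) :
    Tendsto (fun n : ℕ =>
        (∫ x, Real.sqrt n * x * sig (x * β₁ n) ∂(gaussianReal 0 (n : NNReal)⁻¹)) /
        (∫ x, sig (x * β₁ n) ∂(gaussianReal 0 (n : NNReal)⁻¹)))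
      atTop (nhds (2 * ∫ z, z * sig (γ * z) ∂(gaussianReal 0 1))) :=
  conditional_expectation_limit_general β₁ γ hβ
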